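/- arXiv:2012.04918 — 6 statements merged into one kernel-verified Lean document; each statement's English description precedes it below -/
import Mathlib

section
/- Let G=(V,A) be a digraph, C a set of cycles in G, and for each cycle c let V(c) and A(c) denote its vertex and arc sets. Suppose M ⊆ C is an exchange (vertex-disjoint cycles) and define y_{ij}=1 if (i,j) lies on a cycle of M and y_{ij}=0 otherwise. Then M is stable if and only if for every cycle c ∈ C the inequality Σ_{(i,j)∈A(c)} Σ_{k : k ≤_j i} y_{kj} ≥ 1 holds, where the inner sum runs over in-neighbors k of j that j weakly prefers to i. -/
open scoped Classical

/-- A directed cycle in the digraph with arc relation `A`: `pred v` is the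
in-neighbor of `v` on the cycle. -/
structure DCycle (V : Type*) (A : V → V → Prop) where
  verts : Finset V
  pred : V → V
  nonempty : verts.Nonempty
  mem_pred : ∀ v ∈ verts, pred v ∈ verts
  arc : ∀ v ∈ verts, A (pred v) v
  inj : ∀ v ∈ verts, ∀ w ∈ verts, pred v = pred w → v = w
  cyclic : ∀ v ∈ verts, ∀ w ∈ verts, ∃ n : ℕ, pred^[n] v = w

variable {V : Type*} {A : V → V → Prop}

/-- An exchange: a set of pairwise vertex-disjoint cycles. -/
def IsExchange (M : Set (DCycle V A)) : Prop :=
  ∀ c ∈ M, ∀ c' ∈ M, c ≠ c' → Disjoint c.verts c'.verts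

/-- `j` is matched in the exchange `M`. -/
def Matched (M : Set (DCycle V A)) (j : V) : Prop := ∃ c ∈ M, j ∈ c.verts

/-- `j` strictly improves in cycle `c` over its situation in `M`
(lower rank `r j i` = more preferred in-neighbor `i`). -/
def Improves (r : V → V → ℕ) (M : Set (DCycle V A)) (c : DCycle V A) (j : V) : Prop :=
  ¬ Matched M j ∨ ∃ c' ∈ M, j ∈ c'.verts ∧ r j (c.pred j) < r j (c'.pred j)

/-- `j` weakly improves in cycle `c` over its situation in `M`. -/
def WeaklyImproves (r : V → V → ℕ) (M : Set (DCycle V A)) (c : DCycle V A) (j : V) : Prop :=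
  ¬ Matched M j ∨ ∃ c' ∈ M, j ∈ c'.verts ∧ r j (c.pred j) ≤ r j (c'.pred j)

/-- A blocking cycle for exchange `M` among the allowed cycles `C`. -/
def Blocking (r : V → V → ℕ) (C M : Set (DCycle V A)) (c : DCycle V A) : Prop :=
  c ∈ C ∧ c ∉ M ∧ ∀ j ∈ c.verts, Improves r M c j

/-- A weakly blocking cycle for exchange `M`. -/
def WeaklyBlocking (r : V → V → ℕ) (C M : Set (DCycle V A)) (c : DCycle V A) : Prop :=
  c ∈ C ∧ c ∉ M ∧ (∀ j ∈ c.verts, WeaklyImproves r M c j) ∧ ∃ j ∈ c.verts, Improves r M c j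

def Stable (r : V → V → ℕ) (C M : Set (DCycle V A)) : Prop :=
  ∀ c : DCycle V A, ¬ Blocking r C M c

def StronglyStable (r : V → V → ℕ) (C M : Set (DCycle V A)) : Prop :=
  ∀ c : DCycle V A, ¬ WeaklyBlocking r C M c

/-- Strict preferences: the ranks a vertex assigns to its in-neighbors are distinct. -/
def StrictPrefs (A : V → V → Prop) (r : V → V → ℕ) : Prop :=
  ∀ j : V, Set.InjOn (r j) {i | A i j}

/-- The edge-formulation stability constraints (8) characterize stability: `M` is stable
iff for every cycle `c ∈ C`,
`∑_{(i,j) ∈ A(c)} ∑_{k : k ≤_j i} y_{kj} ≥ 1`. -/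
theorem stmt4 {V : Type*} [Fintype V] {A : V → V → Prop} (r : V → V → ℕ)
    (C M : Set (DCycle V A)) (hMC : M ⊆ C) (hM : IsExchange M)
    (y : V → V → ℕ)
    (hy : ∀ i j : V, y i j = if ∃ c ∈ M, j ∈ c.verts ∧ c.pred j = i then 1 else 0) :
    Stable r C M ↔
      ∀ c ∈ C, 1 ≤ ∑ j ∈ c.verts,
        ∑ k ∈ Finset.univ.filter (fun k : V => A k j ∧ r j k ≤ r j (c.pred j)), y k j := by
  have huniq : ∀ c' ∈ M, ∀ c'' ∈ M, ∀ j : V, j ∈ c'.verts → j ∈ c''.verts → c' = c'' := by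
    intro c' hc' c'' hc'' j h1 h2
    by_contra hne
    exact Finset.disjoint_left.mp (hM c' hc' c'' hc'' hne) h1 h2
  constructor
  · intro hS c hc
    by_cases hcM : c ∈ M
    · obtain ⟨j, hj⟩ := c.nonempty
      have hk : c.pred j ∈ Finset.univ.filter (fun k : V => A k j ∧ r j k ≤ r j (c.pred j)) := by
        simp [c.arc j hj]
      have hy1 : y (c.pred j) j = 1 := by
        rw [hy, if_pos]; exact ⟨c, hcM, hj, rfl⟩
      have hterm : 1 ≤ ∑ k ∈ Finset.univ.filter (fun k : V => A k j ∧ r j k ≤ r j (c.pred j)), y k j := by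
        calc 1 = y (c.pred j) j := hy1.symm
        _ ≤ _ := Finset.single_le_sum (f := fun k => y k j) (fun k _ => Nat.zero_le _) hk
      exact le_trans hterm (Finset.single_le_sum
        (f := fun j => ∑ k ∈ Finset.univ.filter (fun k : V => A k j ∧ r j k ≤ r j (c.pred j)), y k j)
        (fun _ _ => Nat.zero_le _) hj)
    · have hnb := hS c
      rw [Blocking] at hnb
      push_neg at hnb
      obtain ⟨j, hj, hImp⟩ := hnb hc hcM
      rw [Improves] at hImp
      push_neg at hImp
      obtain ⟨hMat, hAll⟩ := hImp
      obtain ⟨c', hc', hjc'⟩ := hMat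
      have hle := hAll c' hc' hjc'
      have hk : c'.pred j ∈ Finset.univ.filter (fun k : V => A k j ∧ r j k ≤ r j (c.pred j)) := by
        simp [c'.arc j hjc', hle]
      have hy1 : y (c'.pred j) j = 1 := by
        rw [hy, if_pos]; exact ⟨c', hc', hjc', rfl⟩
      have hterm : 1 ≤ ∑ k ∈ Finset.univ.filter (fun k : V => A k j ∧ r j k ≤ r j (c.pred j)), y k j := by
        calc 1 = y (c'.pred j) j := hy1.symm
        _ ≤ _ := Finset.single_le_sum (f := fun k => y k j) (fun k _ => Nat.zero_le _) hk
      exact le_trans hterm (Finset.single_le_sum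
        (f := fun j => ∑ k ∈ Finset.univ.filter (fun k : V => A k j ∧ r j k ≤ r j (c.pred j)), y k j)
        (fun _ _ => Nat.zero_le _) hj)
  · intro hSum c hB
    obtain ⟨hcC, hcM, hImp⟩ := hB
    have h1 := hSum c hcC
    have h0 : ∑ j ∈ c.verts,
        ∑ k ∈ Finset.univ.filter (fun k : V => A k j ∧ r j k ≤ r j (c.pred j)), y k j = 0 := by
      apply Finset.sum_eq_zero
      intro j hj
      apply Finset.sum_eq_zero
      intro k hk
      simp only [Finset.mem_filter] at hk
      rw [hy, if_neg]
      rintro ⟨c', hc', hjc', hpred⟩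
      rcases hImp j hj with h | ⟨c'', hc'', hjc'', hlt⟩
      · exact h ⟨c', hc', hjc'⟩
      · cases huniq c' hc' c'' hc'' j hjc' hjc''
        rw [hpred] at hlt
        exact absurd hk.2.2 (not_le.mpr hlt)
    omega
end

section
/- Let G=(V,A) be a digraph with strict preferences and C a set of cycles. Let M ⊆ C be an exchange and set y_{ij}=1 if arc (i,j) lies on a cycle of M, else 0. Then M is strongly stable if and only if for every cycle c ∈ C (with |c| denoting the number of arcs of c) the inequality Σ_{(i,j)∈A(c)} y_{ij} + |c|·Σ_{(i,j)∈A(c)} Σ_{k : k <_j i} y_{kj} ≥ |c| holds; i.e., either all arcs of c belong to M, or some vertex j of c is matched in M to an in-neighbor it strictly prefers to its in-neighbor on c. -/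
open scoped Classical

variable {V : Type*} {A : V → V → Prop}

/-- The edge-formulation strong-stability constraints (9), strict preferences:
`M` is strongly stable iff for every cycle `c ∈ C`,
`∑_{(i,j)∈A(c)} y_{ij} + |c|·∑_{(i,j)∈A(c)} ∑_{k : k <_j i} y_{kj} ≥ |c|`. -/
theorem stmt5 {V : Type*} [Fintype V] {A : V → V → Prop} (r : V → V → ℕ)
    (C M : Set (DCycle V A)) (hstrict : StrictPrefs A r) (hMC : M ⊆ C) (hM : IsExchange M)
    (y : V → V → ℕ)
    (hy : ∀ i j : V, y i j = if ∃ c ∈ M, j ∈ c.verts ∧ c.pred j = i then 1 else 0) :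
    StronglyStable r C M ↔
      ∀ c ∈ C, c.verts.card ≤
        (∑ j ∈ c.verts, y (c.pred j) j) +
          c.verts.card * ∑ j ∈ c.verts,
            ∑ k ∈ Finset.univ.filter (fun k : V => A k j ∧ r j k < r j (c.pred j)), y k j := by

  classical
  -- uniqueness of the M-cycle containing a vertex
  have uniq : ∀ c1 ∈ M, ∀ c2 ∈ M, ∀ j : V, j ∈ c1.verts → j ∈ c2.verts → c1 = c2 := by
    intro c1 h1 c2 h2 j hj1 hj2
    by_contra hne
    exact Finset.disjoint_left.mp (hM c1 h1 c2 h2 hne) hj1 hj2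
  have hy1 : ∀ i j : V, y i j ≤ 1 := by
    intro i j; rw [hy]; split <;> simp
  have hyiff : ∀ i j : V, y i j = 1 ↔ ∃ c ∈ M, j ∈ c.verts ∧ c.pred j = i := by
    intro i j; rw [hy]; split_ifs with h <;> simp [h]
  have sum_all_one : ∀ (s : Finset V) (f : V → ℕ), (∀ i ∈ s, f i ≤ 1) →
      s.card ≤ ∑ i ∈ s, f i → ∀ i ∈ s, f i = 1 := by
    intro s f hle hsum i hi
    by_contra h
    have h0 : f i = 0 := Nat.lt_one_iff.mp (lt_of_le_of_ne (hle i hi) h)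
    have h1 : f i + ∑ x ∈ s.erase i, f x = ∑ x ∈ s, f x := Finset.add_sum_erase s f hi
    have h2 : ∑ x ∈ s.erase i, f x ≤ (s.erase i).card • 1 :=
      Finset.sum_le_card_nsmul (s.erase i) f 1 (fun x hx => hle x (Finset.mem_of_mem_erase hx))
    have h3 : (s.erase i).card = s.card - 1 := Finset.card_erase_of_mem hi
    have h4 : 1 ≤ s.card := Finset.card_pos.mpr ⟨i, hi⟩
    simp only [smul_eq_mul, mul_one] at h2
    omega
  constructor
  · intro hSS c hcC
    by_cases hP : ∃ j ∈ c.verts, ∃ c' ∈ M, j ∈ c'.verts ∧ r j (c'.pred j) < r j (c.pred j)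
    · -- second sum is positive
      obtain ⟨j, hj, c', hc', hjc', hr⟩ := hP
      have hk : (c'.pred j) ∈ Finset.univ.filter
          (fun k : V => A k j ∧ r j k < r j (c.pred j)) := by
        simp only [Finset.mem_filter, Finset.mem_univ, true_and]
        exact ⟨c'.arc j hjc', hr⟩
      have hy1' : y (c'.pred j) j = 1 := (hyiff _ _).mpr ⟨c', hc', hjc', rfl⟩
      have hinner : 1 ≤ ∑ k ∈ Finset.univ.filter
          (fun k : V => A k j ∧ r j k < r j (c.pred j)), y k j := by
        calc 1 = y (c'.pred j) j := hy1'.symm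
        _ ≤ _ := Finset.single_le_sum (f := fun k => y k j) (fun _ _ => Nat.zero_le _) hk
      have houter : 1 ≤ ∑ j ∈ c.verts, ∑ k ∈ Finset.univ.filter
          (fun k : V => A k j ∧ r j k < r j (c.pred j)), y k j :=
        le_trans hinner (Finset.single_le_sum
          (f := fun j => ∑ k ∈ Finset.univ.filter
            (fun k : V => A k j ∧ r j k < r j (c.pred j)), y k j)
          (fun _ _ => Nat.zero_le _) hj)
      have : c.verts.card * 1 ≤ c.verts.card * ∑ j ∈ c.verts, ∑ k ∈ Finset.univ.filter
          (fun k : V => A k j ∧ r j k < r j (c.pred j)), y k j :=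
        Nat.mul_le_mul_left _ houter
      omega
    · -- all first-sum terms are 1
      push_neg at hP
      have hall : ∀ j ∈ c.verts, y (c.pred j) j = 1 := by
        intro j hj
        by_cases hcM : c ∈ M
        · exact (hyiff _ _).mpr ⟨c, hcM, hj, rfl⟩
        · -- c is not weakly blocking; everyone weakly improves, so nobody improves
          have hweak : ∀ j' ∈ c.verts, WeaklyImproves r M c j' := by
            intro j' hj'
            by_cases hm : Matched M j'
            · obtain ⟨c', hc', hjc'⟩ := hm
              exact Or.inr ⟨c', hc', hjc', hP j' hj' c' hc' hjc'⟩
            · exact Or.inl hm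
          have hnoimp : ¬ ∃ j' ∈ c.verts, Improves r M c j' := by
            intro hx
            exact hSS c ⟨hcC, hcM, hweak, hx⟩
          push_neg at hnoimp
          have hni := hnoimp j hj
          unfold Improves at hni
          push_neg at hni
          obtain ⟨hm, hno⟩ := hni
          obtain ⟨c', hc', hjc'⟩ := hm
          have heq : r j (c.pred j) = r j (c'.pred j) :=
            le_antisymm (hP j hj c' hc' hjc') (hno c' hc' hjc')
          have hpred : c.pred j = c'.pred j :=
            hstrict j (c.arc j hj) (c'.arc j hjc') heq
          exact (hyiff _ _).mpr ⟨c', hc', hjc', hpred.symm⟩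
      have : ∑ j ∈ c.verts, y (c.pred j) j = c.verts.card := by
        rw [Finset.sum_congr rfl hall]; simp
      omega
  · intro h c hblock
    obtain ⟨hcC, hcM, hweak, j0, hj0, himp⟩ := hblock
    have hineq := h c hcC
    by_cases hP : ∃ j ∈ c.verts, ∃ c' ∈ M, j ∈ c'.verts ∧ r j (c'.pred j) < r j (c.pred j)
    · obtain ⟨j, hj, c', hc', hjc', hr⟩ := hP
      rcases hweak j hj with hm | ⟨c'', hc'', hjc'', hle⟩
      · exact hm ⟨c', hc', hjc'⟩
      · have : c'' = c' := uniq c'' hc'' c' hc' j hjc'' hjc'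
        subst this
        omega
    · push_neg at hP
      -- second sum vanishes
      have hS2 : ∀ j ∈ c.verts, ∑ k ∈ Finset.univ.filter
          (fun k : V => A k j ∧ r j k < r j (c.pred j)), y k j = 0 := by
        intro j hj
        apply Finset.sum_eq_zero
        intro k hk
        simp only [Finset.mem_filter, Finset.mem_univ, true_and] at hk
        rw [hy]
        split_ifs with hx
        · obtain ⟨c', hc', hjc', hpred⟩ := hx
          have h1 := hP j hj c' hc' hjc'
          rw [hpred] at h1
          omega
        · rfl
      have hS2' : ∑ j ∈ c.verts, ∑ k ∈ Finset.univ.filter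
          (fun k : V => A k j ∧ r j k < r j (c.pred j)), y k j = 0 :=
        Finset.sum_eq_zero hS2
      rw [hS2', Nat.mul_zero, Nat.add_zero] at hineq
      have hall := sum_all_one c.verts (fun j => y (c.pred j) j)
        (fun j _ => hy1 _ _) hineq j0 hj0
      obtain ⟨c', hc', hjc', hpred⟩ := (hyiff _ _).mp hall
      rcases himp with hm | ⟨c'', hc'', hjc'', hr⟩
      · exact hm ⟨c', hc', hjc'⟩
      · have : c'' = c' := uniq c'' hc'' c' hc' j0 hjc'' hjc'
        subst this
        rw [hpred] at hr
        exact lt_irrefl _ hr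
end

section
/- Let G=(V,A) be a digraph with strict preferences, C a set of cycles, and for a vertex i and cycle c containing i let B(i,c) be the set of cycles c' ∈ C containing i, c' ≠ c, such that i weakly prefers c' to c (i.e., i's in-neighbor on c' is weakly preferred to its in-neighbor on c). Let M ⊆ C be an exchange and set x_c=1 if c ∈ M, else 0. Then M is stable if and only if for every c ∈ C: x_c + Σ_{s ∈ ⋃_{i∈V(c)} B(i,c)} x_s ≥ 1; i.e., either c is in M or some vertex of c lies in M on a cycle it weakly prefers to c. -/
open scoped Classical

variable {V : Type*} {A : V → V → Prop}

/-- The cycle-formulation stability constraints (12), strict preferences: `M` is stable iff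
for every `c ∈ C`, `x_c + ∑_{s ∈ ⋃_{i ∈ V(c)} B(i,c)} x_s ≥ 1`, where `B(i,c)` is the set
of cycles `s ≠ c` through `i` that `i` weakly prefers to `c`. -/
theorem stmt6 {V : Type*} {A : V → V → Prop} (r : V → V → ℕ)
    (C : Finset (DCycle V A)) (M : Set (DCycle V A))
    (hstrict : StrictPrefs A r) (hMC : M ⊆ ↑C) (hM : IsExchange M)
    (x : DCycle V A → ℕ) (hx : ∀ c, x c = if c ∈ M then 1 else 0) :
    Stable r (↑C) M ↔
      ∀ c ∈ C, 1 ≤ x c +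
        ∑ s ∈ C.filter (fun s => s ≠ c ∧
            ∃ i ∈ c.verts, i ∈ s.verts ∧ r i (s.pred i) ≤ r i (c.pred i)), x s := by
  constructor
  · intro hS c hc
    by_cases hcM : c ∈ M
    · have : x c = 1 := by simp [hx, hcM]
      omega
    · have hnb := hS c
      rw [Blocking] at hnb
      push_neg at hnb
      obtain ⟨j, hj, hni⟩ := hnb (Finset.mem_coe.mpr hc) hcM
      rw [Improves] at hni
      push_neg at hni
      obtain ⟨hm, hni⟩ := hni
      obtain ⟨c', hc'M, hjc'⟩ := hm
      have hle : r j (c'.pred j) ≤ r j (c.pred j) := hni c' hc'M hjc'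
      have hne : c' ≠ c := fun h => hcM (h ▸ hc'M)
      have hmem : c' ∈ C.filter (fun s => s ≠ c ∧
          ∃ i ∈ c.verts, i ∈ s.verts ∧ r i (s.pred i) ≤ r i (c.pred i)) :=
        Finset.mem_filter.mpr ⟨hMC hc'M, hne, j, hj, hjc', hle⟩
      have h1 : x c' = 1 := by simp [hx, hc'M]
      have := Finset.single_le_sum (f := x) (fun _ _ => Nat.zero_le _) hmem
      omega
  · intro h c hb
    obtain ⟨hcC, hcM, hall⟩ := hb
    have h1 := h c (Finset.mem_coe.mp hcC)
    have hxc : x c = 0 := by simp [hx, hcM]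
    rw [hxc, zero_add] at h1
    obtain ⟨s, hs, hxs⟩ := Finset.exists_ne_zero_of_sum_ne_zero (by omega :
      ∑ s ∈ C.filter (fun s => s ≠ c ∧
        ∃ i ∈ c.verts, i ∈ s.verts ∧ r i (s.pred i) ≤ r i (c.pred i)), x s ≠ 0)
    obtain ⟨hsC, hsc, i, hic, his, hle⟩ := Finset.mem_filter.mp hs
    have hsM : s ∈ M := by
      by_contra hsM
      simp [hx, hsM] at hxs
    rcases hall i hic with hnm | ⟨c', hc'M, hic', hlt⟩
    · exact hnm ⟨s, hsM, his⟩
    · have : c' = s := by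
        by_contra hne
        exact Finset.disjoint_left.mp (hM c' hc'M s hsM hne) hic' his
      subst this
      omega
end

section
/- Let G=(V,A) be a digraph and K ≥ 2. Let variables y_{ij} ∈ {0,1} for (i,j) ∈ A satisfy: (1) Σ_{j:(i,j)∈A} y_{ij} ≤ 1 for all i ∈ V; (2) Σ_{j:(j,i)∈A} y_{ji} = Σ_{j:(i,j)∈A} y_{ij} for all i ∈ V; and (3) Σ_{(i,j)∈A(p)} y_{ij} ≤ K−1 for every directed non-cyclic path p in G with exactly K arcs. Then the set of arcs {(i,j) : y_{ij}=1} is a vertex-disjoint union of directed cycles, each of length at most K. Conversely, any vertex-disjoint union of cycles of length at most K yields a feasible y. -/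
open scoped Classical

variable {V : Type*} {A : V → V → Prop}

namespace Stmt10Aux

/-- matched: has an incoming selected arc -/
def Mtch {V : Type*} (y : V → V → ℕ) (i : V) : Prop := ∃ j, y j i = 1

noncomputable def gpred {V : Type*} (y : V → V → ℕ) (i : V) : V :=
  if h : Mtch y i then h.choose else i

section
variable {V : Type*} [Fintype V] {y : V → V → ℕ}
variable (h01 : ∀ i j : V, y i j ≤ 1) (hout : ∀ i : V, ∑ j : V, y i j ≤ 1)
  (hcons : ∀ i : V, ∑ j : V, y j i = ∑ j : V, y i j)

set_option linter.unusedSectionVars false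

lemma sum_unique {f : V → ℕ} (hf : ∑ j : V, f j ≤ 1) {a b : V}
    (ha : f a = 1) (hb : f b = 1) : a = b := by
  by_contra hab
  have h2 : f a + f b ≤ ∑ j : V, f j := by
    have h3 : ∑ j ∈ ({a, b} : Finset V), f j ≤ ∑ j : V, f j :=
      Finset.sum_le_sum_of_subset (by simp)
    rwa [Finset.sum_pair hab] at h3
  omega

include hcons hout in
lemma hin : ∀ i : V, ∑ j : V, y j i ≤ 1 := fun i => (hcons i) ▸ hout i

include h01 hout hcons in
lemma gpred_eq {a i : V} (ha : y a i = 1) : gpred y i = a := by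
  have hm : Mtch y i := ⟨a, ha⟩
  rw [gpred, dif_pos hm]
  exact sum_unique (hin hout hcons i) hm.choose_spec ha

include h01 hout hcons in
lemma gpred_y {i : V} (hm : Mtch y i) : y (gpred y i) i = 1 := by
  rw [gpred, dif_pos hm]; exact hm.choose_spec

include h01 hout hcons in
lemma mtch_of_out {i j : V} (hj : y i j = 1) : Mtch y i := by
  have h1 : 1 ≤ ∑ k : V, y i k :=
    le_trans (by omega) (Finset.single_le_sum (fun k _ => Nat.zero_le _) (Finset.mem_univ j))
  have h2 : ∑ k : V, y k i ≠ 0 := by rw [hcons]; omega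
  obtain ⟨a, -, ha⟩ := Finset.exists_ne_zero_of_sum_ne_zero h2
  exact ⟨a, by have := h01 a i; omega⟩

include h01 hout hcons in
lemma out_of_mtch {i : V} (hm : Mtch y i) : ∃ j, y i j = 1 := by
  obtain ⟨a, ha⟩ := hm
  have h1 : 1 ≤ ∑ k : V, y k i :=
    le_trans (by omega) (Finset.single_le_sum (fun k _ => Nat.zero_le _) (Finset.mem_univ a))
  have h2 : ∑ k : V, y i k ≠ 0 := by rw [← hcons]; omega
  obtain ⟨b, -, hb⟩ := Finset.exists_ne_zero_of_sum_ne_zero h2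
  exact ⟨b, by have := h01 i b; omega⟩

include h01 hout hcons in
lemma mtch_gpred {i : V} (hm : Mtch y i) : Mtch y (gpred y i) :=
  mtch_of_out h01 hout hcons (gpred_y h01 hout hcons hm)

include h01 hout hcons in
lemma mtch_iter {i : V} (hm : Mtch y i) (n : ℕ) : Mtch y ((gpred y)^[n] i) := by
  induction n with
  | zero => exact hm
  | succ n ih => rw [Function.iterate_succ_apply']; exact mtch_gpred h01 hout hcons ih

include h01 hout hcons in
lemma gpred_inj {a b : V} (ha : Mtch y a) (hb : Mtch y b) (h : gpred y a = gpred y b) :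
    a = b := by
  have h1 := gpred_y h01 hout hcons ha
  have h2 := gpred_y h01 hout hcons hb
  rw [h] at h1
  exact sum_unique (hout (gpred y b)) h1 h2

include h01 hout hcons in
lemma iter_inj {a b : V} (ha : Mtch y a) (hb : Mtch y b) (n : ℕ)
    (h : (gpred y)^[n] a = (gpred y)^[n] b) : a = b := by
  induction n with
  | zero => exact h
  | succ n ih =>
      rw [Function.iterate_succ_apply', Function.iterate_succ_apply'] at h
      exact ih (gpred_inj h01 hout hcons
        (mtch_iter h01 hout hcons ha n) (mtch_iter h01 hout hcons hb n) h)

include h01 hout hcons in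
lemma shift_period {v : V} (hv : Mtch y v) {a b : ℕ} (hab : a ≤ b)
    (h : (gpred y)^[a] v = (gpred y)^[b] v) : (gpred y)^[b - a] v = v := by
  have : (gpred y)^[a] ((gpred y)^[b-a] v) = (gpred y)^[a] v := by
    rw [← Function.iterate_add_apply]
    rw [show a + (b - a) = b by omega, h]
  exact iter_inj h01 hout hcons (mtch_iter h01 hout hcons hv _) hv a this

include h01 hout hcons in
lemma exists_period {v : V} (hv : Mtch y v) :
    ∃ m : ℕ, 0 < m ∧ (gpred y)^[m] v = v := by
  obtain ⟨a, b, hab, h⟩ := Finite.exists_ne_map_eq_of_infinite (fun n : ℕ => (gpred y)^[n] v)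
  rcases lt_or_gt_of_ne hab with h' | h'
  · exact ⟨b - a, by omega, shift_period h01 hout hcons hv h'.le h⟩
  · exact ⟨a - b, by omega, shift_period h01 hout hcons hv h'.le h.symm⟩

end

noncomputable def per {V : Type*} [Fintype V] (y : V → V → ℕ) (v : V) : ℕ :=
  sInf {m : ℕ | 0 < m ∧ (gpred y)^[m] v = v}

noncomputable def orb {V : Type*} [Fintype V] (y : V → V → ℕ) (v : V) : Finset V :=
  (Finset.range (per y v)).image (fun n => (gpred y)^[n] v)

section
variable {V : Type*} [Fintype V] {y : V → V → ℕ}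
variable (h01 : ∀ i j : V, y i j ≤ 1) (hout : ∀ i : V, ∑ j : V, y i j ≤ 1)
  (hcons : ∀ i : V, ∑ j : V, y j i = ∑ j : V, y i j)

set_option linter.unusedSectionVars false

include h01 hout hcons in
lemma per_mem {v : V} (hv : Mtch y v) : 0 < per y v ∧ (gpred y)^[per y v] v = v :=
  Nat.sInf_mem (exists_period h01 hout hcons hv)

lemma per_min {v : V} {m : ℕ} (h0 : 0 < m) (hm : m < per y v) : (gpred y)^[m] v ≠ v :=
  fun h => Nat.notMem_of_lt_sInf hm ⟨h0, h⟩

include h01 hout hcons in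
lemma iter_mem_orb {v : V} (hv : Mtch y v) (n : ℕ) : (gpred y)^[n] v ∈ orb y v := by
  obtain ⟨hp, hper⟩ := per_mem h01 hout hcons hv
  have hmod : (gpred y)^[n] v = (gpred y)^[n % per y v] v := by
    conv_lhs => rw [← Nat.mod_add_div n (per y v)]
    rw [Function.iterate_add_apply, Function.iterate_mul,
      Function.iterate_fixed hper]
  rw [hmod]
  exact Finset.mem_image.2 ⟨n % per y v, Finset.mem_range.2 (Nat.mod_lt _ hp), rfl⟩

include h01 hout hcons in
lemma orb_mtch {v x : V} (hv : Mtch y v) (hx : x ∈ orb y v) : Mtch y x := by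
  obtain ⟨n, -, rfl⟩ := Finset.mem_image.1 hx
  exact mtch_iter h01 hout hcons hv n

include h01 hout hcons in
lemma orb_subset {v w : V} (hv : Mtch y v) (hw : w ∈ orb y v) : orb y w ⊆ orb y v := by
  obtain ⟨a, -, rfl⟩ := Finset.mem_image.1 hw
  intro x hx
  obtain ⟨k, -, rfl⟩ := Finset.mem_image.1 hx
  rw [← Function.iterate_add_apply]
  exact iter_mem_orb h01 hout hcons hv _

include h01 hout hcons in
lemma mem_orb_of_mem {v w : V} (hv : Mtch y v) (hw : w ∈ orb y v) : v ∈ orb y w := by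
  have hwm : Mtch y w := orb_mtch h01 hout hcons hv hw
  obtain ⟨hp, hper⟩ := per_mem h01 hout hcons hv
  obtain ⟨a, ha, rfl⟩ := Finset.mem_image.1 hw
  rw [Finset.mem_range] at ha
  have heq : (gpred y)^[per y v - a] ((gpred y)^[a] v) = v := by
    rw [← Function.iterate_add_apply, show per y v - a + a = per y v by omega, hper]
  have h2 := iter_mem_orb h01 hout hcons hwm (per y v - a)
  rwa [heq] at h2

include h01 hout hcons in
lemma orb_eq {v w : V} (hv : Mtch y v) (hw : w ∈ orb y v) : orb y w = orb y v := by
  have hwm : Mtch y w := orb_mtch h01 hout hcons hv hw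
  exact le_antisymm (orb_subset h01 hout hcons hv hw)
    (orb_subset h01 hout hcons hwm (mem_orb_of_mem h01 hout hcons hv hw))

end

section
variable {V : Type*} [Fintype V] {A : V → V → Prop} {y : V → V → ℕ} {K : ℕ}
variable (h01 : ∀ i j : V, y i j ≤ 1) (hA : ∀ i j : V, ¬ A i j → y i j = 0)
  (hout : ∀ i : V, ∑ j : V, y i j ≤ 1)
  (hcons : ∀ i : V, ∑ j : V, y j i = ∑ j : V, y i j)

set_option linter.unusedSectionVars false

include h01 hA hout hcons in
lemma per_le_K (hK : 2 ≤ K)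
    (hpath : ∀ p : Fin (K + 1) → V, Function.Injective p →
      (∀ t : Fin K, A (p t.castSucc) (p t.succ)) →
      ∑ t : Fin K, y (p t.castSucc) (p t.succ) ≤ K - 1)
    {v : V} (hv : Mtch y v) : per y v ≤ K := by
  by_contra h
  push_neg at h
  set P := gpred y with hP
  let p : Fin (K + 1) → V := fun t => P^[K - (t : ℕ)] v
  have hKle : ∀ t : Fin (K + 1), (t : ℕ) ≤ K := fun t => Nat.lt_succ_iff.1 t.isLt
  have hinj : Function.Injective p := by
    intro t t' ht
    by_contra hne
    have hne' : K - (t : ℕ) ≠ K - (t' : ℕ) := by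
      have h1 := hKle t; have h2 := hKle t'
      intro h'; exact hne (Fin.ext (by omega))
    rcases Nat.lt_or_ge (K - (t : ℕ)) (K - (t' : ℕ)) with hlt | hge
    · exact per_min (v := v) (by omega) (by omega)
        (shift_period h01 hout hcons hv hlt.le ht)
    · have hlt2 : K - (t' : ℕ) < K - (t : ℕ) := by omega
      exact per_min (v := v) (by omega) (by omega)
        (shift_period h01 hout hcons hv hlt2.le ht.symm)
  have harcy : ∀ t : Fin K, y (p t.castSucc) (p t.succ) = 1 := by
    intro t
    have ht : (t : ℕ) < K := t.isLt
    have hmt : Mtch y (p t.succ) := mtch_iter h01 hout hcons hv _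
    have hpp : gpred y (p t.succ) = p t.castSucc := by
      show gpred y (P^[K - ((t : ℕ) + 1)] v) = P^[K - (t : ℕ)] v
      have he : P^[(K - ((t : ℕ) + 1)) + 1] v = gpred y (P^[K - ((t : ℕ) + 1)] v) :=
        Function.iterate_succ_apply' P _ v
      rw [← he]
      congr 1; omega
    rw [← hpp]
    exact gpred_y h01 hout hcons hmt
  have harc : ∀ t : Fin K, A (p t.castSucc) (p t.succ) := by
    intro t
    by_contra hna
    have h1 := hA _ _ hna
    have h2 := harcy t
    omega
  have hsum := hpath p hinj harc
  rw [Finset.sum_congr rfl (fun t _ => harcy t)] at hsum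
  simp at hsum
  omega

end

noncomputable def mkC {V : Type*} [Fintype V] {y : V → V → ℕ} (A : V → V → Prop)
    (h01 : ∀ i j : V, y i j ≤ 1)
    (hA : ∀ i j : V, ¬ A i j → y i j = 0)
    (hout : ∀ i : V, ∑ j : V, y i j ≤ 1)
    (hcons : ∀ i : V, ∑ j : V, y j i = ∑ j : V, y i j)
    (v : V) (hv : Mtch y v) : DCycle V A where
  verts := orb y v
  pred := gpred y
  nonempty := ⟨v, Finset.mem_image.2 ⟨0, Finset.mem_range.2 (per_mem h01 hout hcons hv).1, rfl⟩⟩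
  mem_pred := by
    intro x hx
    obtain ⟨n, -, rfl⟩ := Finset.mem_image.1 hx
    have h2 := iter_mem_orb h01 hout hcons hv (n + 1)
    rwa [Function.iterate_succ_apply'] at h2
  arc := fun x hx => by
    have hxm := orb_mtch h01 hout hcons hv hx
    by_contra hna
    have h1 := hA _ _ hna
    have h2 := gpred_y h01 hout hcons hxm
    omega
  inj := fun x hx w hw h => gpred_inj h01 hout hcons
    (orb_mtch h01 hout hcons hv hx) (orb_mtch h01 hout hcons hv hw) h
  cyclic := by
    intro x hx w hw
    obtain ⟨hp, hper⟩ := per_mem h01 hout hcons hv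
    obtain ⟨a, ha, rfl⟩ := Finset.mem_image.1 hx
    obtain ⟨b, hb, rfl⟩ := Finset.mem_image.1 hw
    rw [Finset.mem_range] at ha hb
    refine ⟨b + (per y v - a), ?_⟩
    rw [← Function.iterate_add_apply,
      show b + (per y v - a) + a = b + per y v by omega,
      Function.iterate_add_apply, hper]

lemma dcycle_ext {V : Type*} {A : V → V → Prop} {c c' : DCycle V A}
    (h1 : c.verts = c'.verts) (h2 : c.pred = c'.pred) : c = c' := by
  cases c; cases c'
  simp only at h1 h2
  subst h1; subst h2
  rfl

end Stmt10Aux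


/-- The edge-formulation feasibility constraints (2)--(7) characterize vertex-disjoint
unions of directed cycles of length at most `K`. -/
theorem stmt10 {V : Type*} [Fintype V] (A : V → V → Prop) (K : ℕ) (hK : 2 ≤ K) :
    (∀ y : V → V → ℕ,
      (∀ i j : V, y i j ≤ 1) →
      (∀ i j : V, ¬ A i j → y i j = 0) →
      -- (1) each vertex has out-degree at most one
      (∀ i : V, ∑ j : V, y i j ≤ 1) →
      -- (2) flow conservation
      (∀ i : V, ∑ j : V, y j i = ∑ j : V, y i j) →
      -- (3) path constraints: on every non-cyclic directed path with K arcs,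
      -- at most K-1 arcs are selected
      (∀ p : Fin (K + 1) → V, Function.Injective p →
        (∀ t : Fin K, A (p t.castSucc) (p t.succ)) →
        ∑ t : Fin K, y (p t.castSucc) (p t.succ) ≤ K - 1) →
      -- then the selected arcs form a vertex-disjoint union of cycles of length ≤ K
      ∃ M : Set (DCycle V A), IsExchange M ∧ (∀ c ∈ M, c.verts.card ≤ K) ∧
        ∀ i j : V, (y i j = 1 ↔ ∃ c ∈ M, j ∈ c.verts ∧ c.pred j = i)) ∧
    -- conversely, any vertex-disjoint union of cycles of length ≤ K yields a feasible y
    (∀ M : Set (DCycle V A), IsExchange M → (∀ c ∈ M, c.verts.card ≤ K) →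
      ∀ y : V → V → ℕ,
        (∀ i j : V, y i j = if ∃ c ∈ M, j ∈ c.verts ∧ c.pred j = i then 1 else 0) →
        (∀ i j : V, y i j ≤ 1) ∧
        (∀ i j : V, ¬ A i j → y i j = 0) ∧
        (∀ i : V, ∑ j : V, y i j ≤ 1) ∧
        (∀ i : V, ∑ j : V, y j i = ∑ j : V, y i j) ∧
        (∀ p : Fin (K + 1) → V, Function.Injective p →
          (∀ t : Fin K, A (p t.castSucc) (p t.succ)) →
          ∑ t : Fin K, y (p t.castSucc) (p t.succ) ≤ K - 1)) := by
  constructor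
  · -- forward direction
    intro y h01 hA hout hcons hpath
    refine ⟨{c | ∃ v : V, ∃ hv : Stmt10Aux.Mtch y v,
      c = Stmt10Aux.mkC A h01 hA hout hcons v hv}, ?_, ?_, ?_⟩
    · rintro c ⟨v, hv, rfl⟩ c' ⟨w, hw, rfl⟩ hne
      by_contra hdis
      rw [Finset.not_disjoint_iff] at hdis
      obtain ⟨x, hxv, hxw⟩ := hdis
      have hxv' : x ∈ Stmt10Aux.orb y v := hxv
      have hxw' : x ∈ Stmt10Aux.orb y w := hxw
      apply hne
      refine Stmt10Aux.dcycle_ext ?_ rfl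
      show Stmt10Aux.orb y v = Stmt10Aux.orb y w
      exact (Stmt10Aux.orb_eq h01 hout hcons hv hxv').symm.trans
        (Stmt10Aux.orb_eq h01 hout hcons hw hxw')
    · rintro c ⟨v, hv, rfl⟩
      show (Stmt10Aux.orb y v).card ≤ K
      calc (Stmt10Aux.orb y v).card ≤ (Finset.range (Stmt10Aux.per y v)).card :=
            Finset.card_image_le
        _ = Stmt10Aux.per y v := Finset.card_range _
        _ ≤ K := Stmt10Aux.per_le_K h01 hA hout hcons hK hpath hv
    · intro i j
      constructor
      · intro hyij
        have hj : Stmt10Aux.Mtch y j := ⟨i, hyij⟩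
        refine ⟨Stmt10Aux.mkC A h01 hA hout hcons j hj, ⟨j, hj, rfl⟩, ?_, ?_⟩
        · show j ∈ Stmt10Aux.orb y j
          simpa using Stmt10Aux.iter_mem_orb h01 hout hcons hj 0
        · show Stmt10Aux.gpred y j = i
          exact Stmt10Aux.gpred_eq h01 hout hcons hyij
      · rintro ⟨c, ⟨v, hv, rfl⟩, hjc, hpj⟩
        have hjc' : j ∈ Stmt10Aux.orb y v := hjc
        have hjm : Stmt10Aux.Mtch y j := Stmt10Aux.orb_mtch h01 hout hcons hv hjc'
        have h2 := Stmt10Aux.gpred_y h01 hout hcons hjm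
        have hpj' : Stmt10Aux.gpred y j = i := hpj
        rwa [hpj'] at h2
  · -- converse direction
    intro M hM hMcard y hy
    have hcc : ∀ c ∈ M, ∀ c' ∈ M, ∀ x : V, x ∈ c.verts → x ∈ c'.verts → c = c' := by
      intro c hc c' hc' x hx hx'
      by_contra hne
      exact Finset.disjoint_left.1 (hM c hc c' hc' hne) hx hx'
    have hle : ∀ i j : V, y i j ≤ 1 := by
      intro i j; rw [hy]; split <;> omega
    have key : ∀ i j j' : V, ∀ c ∈ M, ∀ c' ∈ M, j ∈ c.verts → j' ∈ c'.verts →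
        c.pred j = i → c'.pred j' = i → j = j' := by
      intro i j j' c hc c' hc' hj hj' h1 h2
      have hic : i ∈ c.verts := h1 ▸ c.mem_pred j hj
      have hic' : i ∈ c'.verts := h2 ▸ c'.mem_pred j' hj'
      have hcc' := hcc c hc c' hc' i hic hic'
      subst hcc'
      exact c.inj j hj j' hj' (h1.trans h2.symm)
    refine ⟨hle, ?_, ?_, ?_, ?_⟩
    · intro i j hna
      rw [hy, if_neg]
      rintro ⟨c, hc, hj, hpj⟩
      exact hna (hpj ▸ c.arc j hj)
    · intro i
      have e2 : ∑ j : V, y i j = (Finset.univ.filter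
          (fun j : V => ∃ c ∈ M, j ∈ c.verts ∧ c.pred j = i)).card := by
        rw [Finset.sum_congr rfl (fun j _ => hy i j)]
        simpa using Finset.sum_boole _ _
      rw [e2]
      apply Finset.card_le_one.2
      intro a ha b hb
      simp only [Finset.mem_filter, Finset.mem_univ, true_and] at ha hb
      obtain ⟨c, hc, hac, hpc⟩ := ha
      obtain ⟨c', hc', hbc, hpc'⟩ := hb
      exact key i a b c hc c' hc' hac hbc hpc hpc'
    · intro i
      have e1 : ∑ j : V, y j i = (Finset.univ.filter
          (fun j : V => ∃ c ∈ M, i ∈ c.verts ∧ c.pred i = j)).card := by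
        rw [Finset.sum_congr rfl (fun j _ => hy j i)]
        simpa using Finset.sum_boole _ _
      have e2 : ∑ j : V, y i j = (Finset.univ.filter
          (fun j : V => ∃ c ∈ M, j ∈ c.verts ∧ c.pred j = i)).card := by
        rw [Finset.sum_congr rfl (fun j _ => hy i j)]
        simpa using Finset.sum_boole _ _
      rw [e1, e2]
      by_cases hmi : ∃ c ∈ M, i ∈ c.verts
      · obtain ⟨c0, hc0, hi0⟩ := hmi
        have f1 : Finset.univ.filter (fun j : V => ∃ c ∈ M, i ∈ c.verts ∧ c.pred i = j)
            = {c0.pred i} := by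
          ext j
          simp only [Finset.mem_filter, Finset.mem_univ, true_and, Finset.mem_singleton]
          constructor
          · rintro ⟨c, hc, hic, rfl⟩
            rw [hcc c hc c0 hc0 i hic hi0]
          · rintro rfl
            exact ⟨c0, hc0, hi0, rfl⟩
        obtain ⟨j0, hj0mem, hj0⟩ : ∃ a, ∃ ha : a ∈ c0.verts, i = c0.pred a :=
          Finset.surj_on_of_inj_on_of_card_le (fun a _ => c0.pred a)
            (fun a ha => c0.mem_pred a ha)
            (fun a b ha hb h => c0.inj a ha b hb h) le_rfl i hi0
        have f2 : Finset.univ.filter (fun j : V => ∃ c ∈ M, j ∈ c.verts ∧ c.pred j = i)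
            = {j0} := by
          ext j
          simp only [Finset.mem_filter, Finset.mem_univ, true_and, Finset.mem_singleton]
          constructor
          · rintro ⟨c, hc, hjc, hpj⟩
            exact key i j j0 c hc c0 hc0 hjc hj0mem hpj hj0.symm
          · rintro rfl
            exact ⟨c0, hc0, hj0mem, hj0.symm⟩
        rw [f1, f2]
        simp
      · have f1 : Finset.univ.filter (fun j : V => ∃ c ∈ M, i ∈ c.verts ∧ c.pred i = j)
            = ∅ := by
          apply Finset.filter_eq_empty_iff.2
          rintro j - ⟨c, hc, hic, -⟩
          exact hmi ⟨c, hc, hic⟩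
        have f2 : Finset.univ.filter (fun j : V => ∃ c ∈ M, j ∈ c.verts ∧ c.pred j = i)
            = ∅ := by
          apply Finset.filter_eq_empty_iff.2
          rintro j - ⟨c, hc, hjc, hpj⟩
          exact hmi ⟨c, hc, hpj ▸ c.mem_pred j hjc⟩
        rw [f1, f2]
    · intro p hpinj harc
      by_contra hgt
      push_neg at hgt
      have hall : ∀ t : Fin K, y (p t.castSucc) (p t.succ) = 1 := by
        intro t
        by_contra h0
        have hz : y (p t.castSucc) (p t.succ) = 0 := by
          have := hle (p t.castSucc) (p t.succ); omega
        have hsum : ∑ s : Fin K, y (p s.castSucc) (p s.succ)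
            = ∑ s ∈ Finset.univ.erase t, y (p s.castSucc) (p s.succ) :=
          (Finset.sum_erase (f := fun s : Fin K => y (p s.castSucc) (p s.succ))
            Finset.univ hz).symm
        have hb : ∑ s ∈ Finset.univ.erase t, y (p s.castSucc) (p s.succ)
            ≤ (Finset.univ.erase t).card • 1 :=
          Finset.sum_le_card_nsmul _ _ _ (fun s _ => hle _ _)
        have hcard : ((Finset.univ : Finset (Fin K)).erase t).card = K - 1 := by
          rw [Finset.card_erase_of_mem (Finset.mem_univ t), Finset.card_univ,
            Fintype.card_fin]
        rw [hcard, smul_eq_mul, mul_one] at hb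
        omega
      have hex : ∀ t : Fin K, ∃ c ∈ M, p t.succ ∈ c.verts ∧
          c.pred (p t.succ) = p t.castSucc := by
        intro t
        have h1 := hall t
        rw [hy] at h1
        by_contra hn
        rw [if_neg hn] at h1
        omega
      choose c hcM hcmem hcpred using hex
      have hKpos : 0 < K := by omega
      have claim : ∀ n : ℕ, ∀ hn : n < K + 1, p ⟨n, hn⟩ ∈ (c ⟨0, hKpos⟩).verts := by
        intro n
        induction n with
        | zero =>
            intro hn
            have h1 := hcpred ⟨0, hKpos⟩
            have h2 := (c ⟨0, hKpos⟩).mem_pred _ (hcmem ⟨0, hKpos⟩)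
            rw [h1] at h2
            have h3 : (⟨0, hKpos⟩ : Fin K).castSucc = (⟨0, hn⟩ : Fin (K + 1)) := by
              ext; simp
            rwa [h3] at h2
        | succ n ih =>
            intro hn
            have hnK : n < K := by omega
            have ht := ih (by omega)
            set t : Fin K := ⟨n, hnK⟩ with htdef
            have h1 : p t.castSucc ∈ (c t).verts := by
              have h2 := (c t).mem_pred _ (hcmem t)
              rwa [hcpred t] at h2
            have h2 : (t.castSucc : Fin (K + 1)) = ⟨n, by omega⟩ := by
              ext; simp [htdef]
            have hceq : c t = c ⟨0, hKpos⟩ :=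
              hcc (c t) (hcM t) _ (hcM ⟨0, hKpos⟩) _ (h2 ▸ h1) ht
            have h3 : p t.succ ∈ (c ⟨0, hKpos⟩).verts := hceq ▸ hcmem t
            have h4 : (t.succ : Fin (K + 1)) = ⟨n + 1, hn⟩ := by
              ext; simp [htdef]
            exact h4 ▸ h3
      have himg : (Finset.univ.image p) ⊆ (c ⟨0, hKpos⟩).verts := by
        intro x hx
        obtain ⟨t, -, rfl⟩ := Finset.mem_image.1 hx
        exact claim t.1 t.isLt
      have hK1 : K + 1 ≤ K := by
        calc K + 1 = (Finset.univ.image p).card := by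
              rw [Finset.card_image_of_injective _ hpinj, Finset.card_univ,
                Fintype.card_fin]
          _ ≤ (c ⟨0, hKpos⟩).verts.card := Finset.card_le_card himg
          _ ≤ K := hMcard _ (hcM _)
      omega
end

section
/- Let G=(V,A) be a digraph with weak preferences and M an exchange with arc-indicator y. Then M is strongly stable if and only if for every c ∈ C: Σ_{(i,j)∈A(c)} ( y_{ij} + Σ_{k : k =_j i, k ≠ i} y_{kj} ) + |c|·Σ_{(i,j)∈A(c)} Σ_{k : k <_j i} y_{kj} ≥ |c|. -/
open scoped Classical

variable {V : Type*} {A : V → V → Prop}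

/-- The edge-formulation strong-stability constraints (10) for weak preferences: `M` is
strongly stable iff for every cycle `c ∈ C`,
`∑_{(i,j)∈A(c)} (y_{ij} + ∑_{k =_j i, k ≠ i} y_{kj})
  + |c|·∑_{(i,j)∈A(c)} ∑_{k <_j i} y_{kj} ≥ |c|`. -/
theorem stmt16 {V : Type*} [Fintype V] {A : V → V → Prop} (r : V → V → ℕ)
    (C M : Set (DCycle V A)) (hMC : M ⊆ C) (hM : IsExchange M)
    (y : V → V → ℕ)
    (hy : ∀ i j : V, y i j = if ∃ c ∈ M, j ∈ c.verts ∧ c.pred j = i then 1 else 0) :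
    StronglyStable r C M ↔
      ∀ c ∈ C, c.verts.card ≤
        (∑ j ∈ c.verts, (y (c.pred j) j +
            ∑ k ∈ Finset.univ.filter
              (fun k : V => A k j ∧ r j k = r j (c.pred j) ∧ k ≠ c.pred j), y k j)) +
          c.verts.card * ∑ j ∈ c.verts,
            ∑ k ∈ Finset.univ.filter (fun k : V => A k j ∧ r j k < r j (c.pred j)), y k j := by
  have huniq : ∀ c₁ ∈ M, ∀ c₂ ∈ M, ∀ j : V, j ∈ c₁.verts → j ∈ c₂.verts → c₁ = c₂ := by
    intro c₁ h₁ c₂ h₂ j hj₁ hj₂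
    by_contra hne
    exact (Finset.disjoint_left.mp (hM c₁ h₁ c₂ h₂ hne)) hj₁ hj₂
  have hyval : ∀ c' ∈ M, ∀ j ∈ c'.verts, ∀ k : V, y k j = if k = c'.pred j then 1 else 0 := by
    intro c' hc' j hj k
    rw [hy]
    by_cases hk : k = c'.pred j
    · subst hk
      rw [if_pos ⟨c', hc', hj, rfl⟩, if_pos rfl]
    · rw [if_neg, if_neg hk]
      rintro ⟨c'', hc'', hj'', hp⟩
      exact hk (by rw [← hp, huniq c'' hc'' c' hc' j hj'' hj])
  have hyun : ∀ j : V, ¬ Matched M j → ∀ k : V, y k j = 0 := by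
    intro j hm k
    rw [hy, if_neg]
    rintro ⟨c', h1, h2, _⟩
    exact hm ⟨c', h1, h2⟩
  constructor
  · intro hSS c hc
    have hcard : 1 ≤ c.verts.card := Finset.card_pos.mpr c.nonempty
    have key : (∀ j ∈ c.verts, 1 ≤ y (c.pred j) j + ∑ k ∈ Finset.univ.filter (fun k : V => A k j ∧ r j k = r j (c.pred j) ∧ k ≠ c.pred j), y k j) ∨ (1 ≤ ∑ j ∈ c.verts, ∑ k ∈ Finset.univ.filter (fun k : V => A k j ∧ r j k < r j (c.pred j)), y k j) := by
      have heq1 : ∀ j ∈ c.verts, ∀ c' ∈ M, j ∈ c'.verts → r j (c'.pred j) = r j (c.pred j) → 1 ≤ y (c.pred j) j + ∑ k ∈ Finset.univ.filter (fun k : V => A k j ∧ r j k = r j (c.pred j) ∧ k ≠ c.pred j), y k j := by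
        intro j hj c' hc' hj' hr
        by_cases hp : c'.pred j = c.pred j
        · have : y (c.pred j) j = 1 := by rw [hyval c' hc' j hj', if_pos hp.symm]
          omega
        · have hmem : c'.pred j ∈ Finset.univ.filter (fun k : V => A k j ∧ r j k = r j (c.pred j) ∧ k ≠ c.pred j) := by
            simp only [Finset.mem_filter, Finset.mem_univ, true_and]
            exact ⟨c'.arc j hj', hr, hp⟩
          have h1 : y (c'.pred j) j = 1 := by rw [hyval c' hc' j hj', if_pos rfl]
          have h2 : y (c'.pred j) j ≤ ∑ k ∈ Finset.univ.filter (fun k : V => A k j ∧ r j k = r j (c.pred j) ∧ k ≠ c.pred j), y k j := Finset.single_le_sum (f := fun k => y k j) (fun k _ => Nat.zero_le _) hmem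
          omega
      have hlt1 : ∀ j ∈ c.verts, ∀ c' ∈ M, j ∈ c'.verts → r j (c'.pred j) < r j (c.pred j) → 1 ≤ ∑ j ∈ c.verts, ∑ k ∈ Finset.univ.filter (fun k : V => A k j ∧ r j k < r j (c.pred j)), y k j := by
        intro j hj c' hc' hj' hr
        have hmem : c'.pred j ∈ Finset.univ.filter (fun k : V => A k j ∧ r j k < r j (c.pred j)) := by
          simp only [Finset.mem_filter, Finset.mem_univ, true_and]
          exact ⟨c'.arc j hj', hr⟩
        have h1 : y (c'.pred j) j = 1 := by rw [hyval c' hc' j hj', if_pos rfl]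
        have h2 : y (c'.pred j) j ≤ ∑ k ∈ Finset.univ.filter (fun k : V => A k j ∧ r j k < r j (c.pred j)), y k j := Finset.single_le_sum (f := fun k => y k j) (fun k _ => Nat.zero_le _) hmem
        have h3 : ∑ k ∈ Finset.univ.filter (fun k : V => A k j ∧ r j k < r j (c.pred j)), y k j ≤ ∑ j ∈ c.verts, ∑ k ∈ Finset.univ.filter (fun k : V => A k j ∧ r j k < r j (c.pred j)), y k j := Finset.single_le_sum (f := fun j => ∑ k ∈ Finset.univ.filter (fun k : V => A k j ∧ r j k < r j (c.pred j)), y k j) (fun j _ => Nat.zero_le _) hj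
        omega
      by_cases hcM : c ∈ M
      · left
        intro j hj
        exact heq1 j hj c hcM hj rfl
      · have hnb := hSS c
        unfold WeaklyBlocking at hnb
        push_neg at hnb
        rcases Classical.em (∀ j ∈ c.verts, WeaklyImproves r M c j) with hw | hw
        · have hni := hnb hc hcM hw
          by_cases hstrict : ∃ j ∈ c.verts, ∃ c' ∈ M, j ∈ c'.verts ∧ r j (c'.pred j) < r j (c.pred j)
          · right
            obtain ⟨j, hj, c', hc', hj', hr⟩ := hstrict
            exact hlt1 j hj c' hc' hj' hr
          · left
            intro j hj
            have himp := hni j hj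
            unfold Improves at himp
            push_neg at himp
            obtain ⟨hmj, hle⟩ := himp
            obtain ⟨c', hc', hj'⟩ := hmj
            have h1 := hle c' hc' hj'
            have h2 : ¬ (r j (c'.pred j) < r j (c.pred j)) := fun h => hstrict ⟨j, hj, c', hc', hj', h⟩
            exact heq1 j hj c' hc' hj' (by omega)
        · right
          push_neg at hw
          obtain ⟨j, hj, hnw⟩ := hw
          unfold WeaklyImproves at hnw
          push_neg at hnw
          obtain ⟨hmj, hlt⟩ := hnw
          obtain ⟨c', hc', hj'⟩ := hmj
          exact hlt1 j hj c' hc' hj' (hlt c' hc' hj')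
    rcases key with h | h
    · have h1 : c.verts.card = ∑ _j ∈ c.verts, 1 := by simp
      have h2 : ∑ _j ∈ c.verts, 1 ≤ ∑ j ∈ c.verts, (y (c.pred j) j + ∑ k ∈ Finset.univ.filter (fun k : V => A k j ∧ r j k = r j (c.pred j) ∧ k ≠ c.pred j), y k j) := Finset.sum_le_sum h
      omega
    · have := Nat.mul_le_mul_left c.verts.card h
      omega
  · intro hineq c hblock
    obtain ⟨hcC, hcM, hweak, j0, hj0, himp⟩ := hblock
    have hn := hineq c hcC
    have hS2 : ∑ j ∈ c.verts, ∑ k ∈ Finset.univ.filter (fun k : V => A k j ∧ r j k < r j (c.pred j)), y k j = 0 := by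
      apply Finset.sum_eq_zero
      intro j hj
      apply Finset.sum_eq_zero
      intro k hk
      simp only [Finset.mem_filter, Finset.mem_univ, true_and] at hk
      by_contra hne
      have hy1 : ∃ c' ∈ M, j ∈ c'.verts ∧ c'.pred j = k := by
        by_contra h
        rw [hy, if_neg h] at hne
        exact hne rfl
      obtain ⟨c', hc', hj', hp⟩ := hy1
      rcases hweak j hj with hum | ⟨c'', hc'', hj'', hr⟩
      · exact hum ⟨c', hc', hj'⟩
      · have : c'' = c' := huniq c'' hc'' c' hc' j hj'' hj'
        subst this
        rw [hp] at hr
        omega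
    have ht1 : ∀ j ∈ c.verts, y (c.pred j) j + ∑ k ∈ Finset.univ.filter (fun k : V => A k j ∧ r j k = r j (c.pred j) ∧ k ≠ c.pred j), y k j ≤ 1 := by
      intro j _
      by_cases hmj : Matched M j
      · obtain ⟨c', hc', hj'⟩ := hmj
        have hv := hyval c' hc' j hj'
        have hle : ∀ k ∈ Finset.univ.filter (fun k : V => A k j ∧ r j k = r j (c.pred j) ∧ k ≠ c.pred j), y k j ≤ if k = c'.pred j then 1 else 0 := fun k _ => le_of_eq (hv k)
        have hsum : ∑ k ∈ Finset.univ.filter (fun k : V => A k j ∧ r j k = r j (c.pred j) ∧ k ≠ c.pred j), y k j ≤ ∑ k ∈ Finset.univ.filter (fun k : V => A k j ∧ r j k = r j (c.pred j) ∧ k ≠ c.pred j), (if k = c'.pred j then 1 else 0) := Finset.sum_le_sum hle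
        rw [Finset.sum_ite_eq' _ _ (fun _ => 1)] at hsum
        by_cases hcc : c.pred j = c'.pred j
        · have h0 : y (c.pred j) j = 1 := by rw [hv, if_pos hcc]
          have hs0 : ∑ k ∈ Finset.univ.filter (fun k : V => A k j ∧ r j k = r j (c.pred j) ∧ k ≠ c.pred j), y k j = 0 := by
            apply Finset.sum_eq_zero
            intro k hk
            simp only [Finset.mem_filter, Finset.mem_univ, true_and] at hk
            rw [hv, if_neg]
            intro h
            exact hk.2.2 (h.trans hcc.symm)
          omega
        · have h0 : y (c.pred j) j = 0 := by rw [hv, if_neg hcc]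
          split_ifs at hsum <;> omega
      · have h0 : y (c.pred j) j = 0 := hyun j hmj _
        have hsum : ∑ k ∈ Finset.univ.filter (fun k : V => A k j ∧ r j k = r j (c.pred j) ∧ k ≠ c.pred j), y k j = 0 := Finset.sum_eq_zero (fun k _ => hyun j hmj k)
        omega
    have ht0 : y (c.pred j0) j0 + ∑ k ∈ Finset.univ.filter (fun k : V => A k j0 ∧ r j0 k = r j0 (c.pred j0) ∧ k ≠ c.pred j0), y k j0 = 0 := by
      rcases himp with hum | ⟨c', hc', hj', hr⟩
      · have h0 : y (c.pred j0) j0 = 0 := hyun j0 hum _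
        have hsum : ∑ k ∈ Finset.univ.filter (fun k : V => A k j0 ∧ r j0 k = r j0 (c.pred j0) ∧ k ≠ c.pred j0), y k j0 = 0 := Finset.sum_eq_zero (fun k _ => hyun j0 hum k)
        omega
      · have hv := hyval c' hc' j0 hj'
        have h0 : y (c.pred j0) j0 = 0 := by
          rw [hv, if_neg]
          intro h
          rw [h] at hr
          omega
        have hsum : ∑ k ∈ Finset.univ.filter (fun k : V => A k j0 ∧ r j0 k = r j0 (c.pred j0) ∧ k ≠ c.pred j0), y k j0 = 0 := by
          apply Finset.sum_eq_zero
          intro k hk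
          simp only [Finset.mem_filter, Finset.mem_univ, true_and] at hk
          rw [hv, if_neg]
          intro h
          rw [h] at hk
          omega
        omega
    have hS1 : ∑ j ∈ c.verts, (y (c.pred j) j + ∑ k ∈ Finset.univ.filter (fun k : V => A k j ∧ r j k = r j (c.pred j) ∧ k ≠ c.pred j), y k j) ≤ c.verts.card - 1 := by
      have e1 : ∑ j ∈ c.verts, (y (c.pred j) j + ∑ k ∈ Finset.univ.filter (fun k : V => A k j ∧ r j k = r j (c.pred j) ∧ k ≠ c.pred j), y k j) = ∑ j ∈ c.verts.erase j0, (y (c.pred j) j + ∑ k ∈ Finset.univ.filter (fun k : V => A k j ∧ r j k = r j (c.pred j) ∧ k ≠ c.pred j), y k j) := by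
        rw [← Finset.add_sum_erase _ _ hj0, ht0, zero_add]
      have e2 : ∑ j ∈ c.verts.erase j0, (y (c.pred j) j + ∑ k ∈ Finset.univ.filter (fun k : V => A k j ∧ r j k = r j (c.pred j) ∧ k ≠ c.pred j), y k j) ≤ ∑ _j ∈ c.verts.erase j0, 1 := Finset.sum_le_sum (fun j hj => ht1 j (Finset.mem_of_mem_erase hj))
      have e3 : ∑ _j ∈ c.verts.erase j0, 1 = (c.verts.erase j0).card := by simp
      have e4 : (c.verts.erase j0).card = c.verts.card - 1 := Finset.card_erase_of_mem hj0
      omega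
    have hcard : 1 ≤ c.verts.card := Finset.card_pos.mpr c.nonempty
    rw [hS2, Nat.mul_zero, Nat.add_zero] at hn
    omega
end

section
/- In the housing market model with strict preferences (unbounded cycle length), the exchange produced by the Top Trading Cycles algorithm is strongly stable, and it is the unique strongly stable exchange. -/
open scoped Classical

variable {V : Type*} {A : V → V → Prop}

/-- In the housing market, `π` is an output of the Top Trading Cycles algorithm if there
is an assignment of removal rounds `ρ` such that each trading cycle lies within one round
and every agent receives its favorite house among those still present at its round. -/
def IsTTC {V : Type*} (r : V → V → ℕ) (π : Equiv.Perm V) : Prop :=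
  ∃ ρ : V → ℕ, ∀ j : V, ρ (π j) = ρ j ∧ ∀ k : V, ρ j ≤ ρ k → r j (π j) ≤ r j k

/-- A weakly blocking coalition: a nonempty set trading among themselves so that all its
members weakly improve and at least one strictly improves. -/
def HMStronglyStable {V : Type*} (r : V → V → ℕ) (π : Equiv.Perm V) : Prop :=
  ∀ (S : Finset V) (σ : Equiv.Perm V), S.Nonempty → (∀ j ∈ S, σ j ∈ S) →
    ¬ ((∀ j ∈ S, r j (σ j) ≤ r j (π j)) ∧ ∃ j ∈ S, r j (σ j) < r j (π j))

/-- In the housing market with strict preferences and unbounded cycle length, the Top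
Trading Cycles exchange is strongly stable and it is the unique strongly stable
exchange. -/
theorem stmt17 {V : Type*} [Fintype V] (r : V → V → ℕ)
    (hstrict : ∀ j : V, Function.Injective (r j))
    (π : Equiv.Perm V) (hπ : IsTTC r π) :
    HMStronglyStable r π ∧ ∀ π' : Equiv.Perm V, HMStronglyStable r π' → π' = π := by
  obtain ⟨ρ, hρ⟩ := hπ
  have hρπ : ∀ j, ρ (π j) = ρ j := fun j => (hρ j).1
  have hfav : ∀ j k, ρ j ≤ ρ k → r j (π j) ≤ r j k := fun j => (hρ j).2
  constructor
  · intro S σ _hne hmap hcon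
    obtain ⟨hweak, j0, hj0, hstr⟩ := hcon
    have main : ∀ n : ℕ, ∀ j ∈ S, ρ j = n → σ j = π j := by
      intro n
      induction n using Nat.strong_induction_on with
      | _ n IH =>
        intro j hj hjn
        have hge : n ≤ ρ (σ j) := by
          by_contra h
          push_neg at h
          set T : Set V := {k | k ∈ S ∧ ρ k < n} with hT
          have hmapsTo : Set.MapsTo σ T T := by
            intro k hk
            have hσk : σ k = π k := IH (ρ k) hk.2 k hk.1 rfl
            exact ⟨by simpa [hσk] using hmap k hk.1, by rw [hσk, hρπ]; exact hk.2⟩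
          have hbij := (Set.Finite.injOn_iff_bijOn_of_mapsTo (Set.toFinite T) hmapsTo).mp
            (fun a _ b _ hab => σ.injective hab)
          obtain ⟨t, ht, hts⟩ := hbij.surjOn (show σ j ∈ T from ⟨hmap j hj, h⟩)
          have htj : t = j := σ.injective hts
          subst htj
          exact absurd hjn (Nat.ne_of_lt ht.2)
        have h1 : r j (π j) ≤ r j (σ j) := hfav j (σ j) (by omega)
        exact hstrict j (le_antisymm (hweak j hj) h1)
    have := main (ρ j0) j0 hj0 rfl
    rw [this] at hstr
    exact lt_irrefl _ hstr
  · intro π' hss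
    have main : ∀ n : ℕ, ∀ j : V, ρ j = n → π' j = π j := by
      intro n
      induction n using Nat.strong_induction_on with
      | _ n IH =>
        intro j hjn
        have hge : ∀ k : V, ρ k = n → n ≤ ρ (π' k) := by
          intro k hkn
          by_contra h
          push_neg at h
          set T : Set V := {x | ρ x < n} with hT
          have hmapsTo : Set.MapsTo π' T T := by
            intro x hx
            have hx' : π' x = π x := IH (ρ x) hx x rfl
            show ρ (π' x) < n
            rw [hx', hρπ]; exact hx
          have hbij := (Set.Finite.injOn_iff_bijOn_of_mapsTo (Set.toFinite T) hmapsTo).mp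
            (fun a _ b _ hab => π'.injective hab)
          obtain ⟨t, ht, hts⟩ := hbij.surjOn (show π' k ∈ T from h)
          have htk : t = k := π'.injective hts
          subst htk
          exact absurd hkn (Nat.ne_of_lt ht)
        have hweak : ∀ k : V, ρ k = n → r k (π k) ≤ r k (π' k) := fun k hk =>
          hfav k (π' k) (by rw [hk]; exact hge k hk)
        by_contra hne
        refine hss (Finset.univ.filter fun k => ρ k = n) π ⟨j, by simp [hjn]⟩
          (fun k hk => ?_) ⟨fun k hk => ?_, j, by simp [hjn], ?_⟩
        · simp only [Finset.mem_filter, Finset.mem_univ, true_and] at hk ⊢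
          rw [hρπ]; exact hk
        · simp only [Finset.mem_filter, Finset.mem_univ, true_and] at hk
          exact hweak k hk
        · exact lt_of_le_of_ne (hweak j hjn) (fun hh => hne (hstrict j hh).symm)
    exact Equiv.ext fun j => main (ρ j) j rfl
end
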